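/- arXiv:2001.06213 — 3 statements merged into one kernel-verified Lean document; each statement's English description precedes it below -/
import Mathlib

section
/- Let q = a + b·i + c·j + d·k be a nonzero real quaternion and set |q| = √(a² + b² + c² + d²). For every integer n ≥ 1, write q^n = A_n + B_n·i + C_n·j + D_n·k with A_n, B_n, C_n, D_n real. Then A_n = (|q|^n/2)·(U_n(a/|q|) − U_{n−2}(a/|q|)), B_n = b·|q|^{n−1}·U_{n−1}(a/|q|), C_n = c·|q|^{n−1}·U_{n−1}(a/|q|), and D_n = d·|q|^{n−1}·U_{n−1}(a/|q|). -/
/-!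
A quaternion satisfies `q ^ 2 - 2 (re q) q + ‖q‖ ^ 2 = 0`, i.e. `q ^ 2 = 2 r c q - r ^ 2` with
`r = ‖q‖` and `c = re q / r`. In any algebra, an element `a` with `a ^ 2 = 2 r c a - r ^ 2` has
`a ^ (n + 1) = r ^ n U_n(c) a - r ^ (n + 1) U_{n-1}(c)`, since both sides satisfy the three-term
recurrence of the Chebyshev polynomials `U`. Reading off components gives the formulas; for the
real part one more use of the recurrence turns `r ^ n U_n(c) re q - r ^ (n + 1) U_{n-1}(c)` into
`r ^ (n + 1) (U_{n+1}(c) - U_{n-1}(c)) / 2`.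
-/

open Polynomial Chebyshev

theorem pow_succ_eq_chebyshevU_of_sq_eq {R A : Type*} [CommRing R] [Ring A] [Algebra R A]
    {a : A} {r c : R} (ha : a ^ 2 = (2 * r * c) • a - algebraMap R A (r ^ 2)) (n : ℕ) :
    a ^ (n + 1) =
      (r ^ n * (U R n).eval c) • a - algebraMap R A (r ^ (n + 1) * (U R (n - 1)).eval c) := by
  induction n with
  | zero => simp
  | succ n ih =>
    have hU : (U R (n + 1)).eval c = 2 * c * (U R n).eval c - (U R (n - 1)).eval c := by
      simp [U_add_one]
    rw [pow_succ, ih, sub_mul, smul_mul_assoc, ← sq, ha, ← Algebra.smul_def,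
      Nat.cast_succ, add_sub_cancel_right, hU]
    simp only [Algebra.algebraMap_eq_smul_one]
    module

namespace Quaternion

theorem sq_eq_two_re_smul_sub_normSq {R : Type*} [CommRing R] (q : ℍ[R]) :
    q ^ 2 = (2 * q.re) • q - algebraMap R ℍ[R] (normSq q) := by
  ext <;> simp [sq, normSq_def'] <;> ring

theorem norm_mul_re_div_norm (q : ℍ) : ‖q‖ * (q.re / ‖q‖) = q.re := by
  rcases eq_or_ne q 0 with rfl | hq
  · simp
  · exact mul_div_cancel₀ _ (norm_ne_zero_iff.2 hq)

theorem sq_eq_two_norm_mul_re_div_norm_smul_sub (q : ℍ) :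
    q ^ 2 = (2 * ‖q‖ * (q.re / ‖q‖)) • q - algebraMap ℝ ℍ (‖q‖ ^ 2) := by
  rw [mul_assoc, norm_mul_re_div_norm, sq ‖q‖, ← normSq_eq_norm_mul_self,
    sq_eq_two_re_smul_sub_normSq]

theorem sqrt_re_sq_add_imI_sq_add_imJ_sq_add_imK_sq (q : ℍ) :
    √(q.re ^ 2 + q.imI ^ 2 + q.imJ ^ 2 + q.imK ^ 2) = ‖q‖ := by
  rw [norm_eq_sqrt_real_inner, inner_self, normSq_def']

end Quaternion

theorem quaternion_pow_chebyshevU_general (q : Quaternion ℝ) (n : ℕ) :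
    (q ^ n).re = Real.sqrt (q.re ^ 2 + q.imI ^ 2 + q.imJ ^ 2 + q.imK ^ 2) ^ n / 2 *
        ((Polynomial.Chebyshev.U ℝ (n : ℤ)).eval
            (q.re / Real.sqrt (q.re ^ 2 + q.imI ^ 2 + q.imJ ^ 2 + q.imK ^ 2))
          - (Polynomial.Chebyshev.U ℝ ((n : ℤ) - 2)).eval
            (q.re / Real.sqrt (q.re ^ 2 + q.imI ^ 2 + q.imJ ^ 2 + q.imK ^ 2))) ∧
    (q ^ n).imI = q.imI * Real.sqrt (q.re ^ 2 + q.imI ^ 2 + q.imJ ^ 2 + q.imK ^ 2) ^ (n - 1) *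
        (Polynomial.Chebyshev.U ℝ ((n : ℤ) - 1)).eval
          (q.re / Real.sqrt (q.re ^ 2 + q.imI ^ 2 + q.imJ ^ 2 + q.imK ^ 2)) ∧
    (q ^ n).imJ = q.imJ * Real.sqrt (q.re ^ 2 + q.imI ^ 2 + q.imJ ^ 2 + q.imK ^ 2) ^ (n - 1) *
        (Polynomial.Chebyshev.U ℝ ((n : ℤ) - 1)).eval
          (q.re / Real.sqrt (q.re ^ 2 + q.imI ^ 2 + q.imJ ^ 2 + q.imK ^ 2)) ∧
    (q ^ n).imK = q.imK * Real.sqrt (q.re ^ 2 + q.imI ^ 2 + q.imJ ^ 2 + q.imK ^ 2) ^ (n - 1) *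
        (Polynomial.Chebyshev.U ℝ ((n : ℤ) - 1)).eval
          (q.re / Real.sqrt (q.re ^ 2 + q.imI ^ 2 + q.imJ ^ 2 + q.imK ^ 2)) := by
  rw [Quaternion.sqrt_re_sq_add_imI_sq_add_imJ_sq_add_imK_sq]
  rcases n with _ | m
  · norm_num [Quaternion.re_one, Quaternion.imI_one, Quaternion.imJ_one, Quaternion.imK_one]
  · rw [pow_succ_eq_chebyshevU_of_sq_eq (Quaternion.sq_eq_two_norm_mul_re_div_norm_smul_sub q),
      Nat.cast_succ, add_sub_cancel_right, Nat.add_sub_cancel, U_add_one,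
      show (m : ℤ) + 1 - 2 = m - 1 by ring]
    simp only [Quaternion.algebraMap_def, Quaternion.re_sub, Quaternion.re_smul,
      Quaternion.imI_sub, Quaternion.imI_smul, Quaternion.imJ_sub, Quaternion.imJ_smul,
      Quaternion.imK_sub, Quaternion.imK_smul, Quaternion.re_coe, Quaternion.imI_coe,
      Quaternion.imJ_coe, Quaternion.imK_coe, smul_eq_mul, eval_sub, eval_mul, eval_X, eval_ofNat]
    refine ⟨?_, by ring, by ring, by ring⟩
    linear_combination
      ‖q‖ ^ m * (U ℝ m).eval (q.re / ‖q‖) * (Quaternion.norm_mul_re_div_norm q).symm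

/-- Powers of a quaternion: if `q = a + bi + cj + dk ≠ 0` and `|q| = √(a²+b²+c²+d²)`,
then writing `qⁿ = Aₙ + Bₙ i + Cₙ j + Dₙ k`, one has
`Aₙ = (|q|ⁿ/2)(U_n(a/|q|) − U_{n−2}(a/|q|))` and
`Bₙ = b|q|^{n−1} U_{n−1}(a/|q|)`, `Cₙ = c|q|^{n−1} U_{n−1}(a/|q|)`,
`Dₙ = d|q|^{n−1} U_{n−1}(a/|q|)`, where `U` is the Chebyshev polynomial of the
second kind (with `U_{−1} = 0`). -/
theorem quaternion_pow_chebyshevU (q : Quaternion ℝ) (hq : q ≠ 0) (n : ℕ) (hn : 1 ≤ n) :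
    (q ^ n).re = Real.sqrt (q.re ^ 2 + q.imI ^ 2 + q.imJ ^ 2 + q.imK ^ 2) ^ n / 2 *
        ((Polynomial.Chebyshev.U ℝ (n : ℤ)).eval
            (q.re / Real.sqrt (q.re ^ 2 + q.imI ^ 2 + q.imJ ^ 2 + q.imK ^ 2))
          - (Polynomial.Chebyshev.U ℝ ((n : ℤ) - 2)).eval
            (q.re / Real.sqrt (q.re ^ 2 + q.imI ^ 2 + q.imJ ^ 2 + q.imK ^ 2))) ∧
    (q ^ n).imI = q.imI * Real.sqrt (q.re ^ 2 + q.imI ^ 2 + q.imJ ^ 2 + q.imK ^ 2) ^ (n - 1) *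
        (Polynomial.Chebyshev.U ℝ ((n : ℤ) - 1)).eval
          (q.re / Real.sqrt (q.re ^ 2 + q.imI ^ 2 + q.imJ ^ 2 + q.imK ^ 2)) ∧
    (q ^ n).imJ = q.imJ * Real.sqrt (q.re ^ 2 + q.imI ^ 2 + q.imJ ^ 2 + q.imK ^ 2) ^ (n - 1) *
        (Polynomial.Chebyshev.U ℝ ((n : ℤ) - 1)).eval
          (q.re / Real.sqrt (q.re ^ 2 + q.imI ^ 2 + q.imJ ^ 2 + q.imK ^ 2)) ∧
    (q ^ n).imK = q.imK * Real.sqrt (q.re ^ 2 + q.imI ^ 2 + q.imJ ^ 2 + q.imK ^ 2) ^ (n - 1) *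
        (Polynomial.Chebyshev.U ℝ ((n : ℤ) - 1)).eval
          (q.re / Real.sqrt (q.re ^ 2 + q.imI ^ 2 + q.imJ ^ 2 + q.imK ^ 2)) :=
  quaternion_pow_chebyshevU_general q n
end

section
/- Let l ≥ 1 and let a, b, c : ℤ → ℂ be l-periodic sequences. Let p be an integer, let T = tr A_l(p), let D = det A_l(p) = Π_{j=1}^{l} b_{p+j−1}·c_{p+j−1}, assume D ≠ 0, and let d be a complex number with d² = D. Then for every integer m ≥ 1, K_{lm}(p) = d^{m−1}·U_{m−1}(T/(2d))·K_l(p) − d^m·U_{m−2}(T/(2d)). -/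
/-- The continuant `K_n(p)` of the sequences `a b c : ℤ → ℂ`: the determinant of the
`n × n` tridiagonal matrix with diagonal `a_p, …, a_{p+n-1}`, superdiagonal
`b_p, …, b_{p+n-2}` and subdiagonal `c_p, …, c_{p+n-2}`; it equals `1` for `n = 0`
and `0` for `n < 0`. -/
noncomputable def contK (a b c : ℤ → ℂ) (p n : ℤ) : ℂ :=
  if n < 0 then 0 else
    Matrix.det (Matrix.of fun i j : Fin n.toNat =>
      if (i : ℕ) = (j : ℕ) then a (p + (i : ℕ))
      else if (i : ℕ) + 1 = (j : ℕ) then b (p + (i : ℕ))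
      else if (i : ℕ) = (j : ℕ) + 1 then c (p + (j : ℕ))
      else 0)

/-- The 2×2 matrix `L(α, β)` with first row `(α, β)` and second row `(1, 0)`. -/
def Lmat (α β : ℂ) : Matrix (Fin 2) (Fin 2) ℂ := !![α, β; 1, 0]

/-- `A_n(p) = L(a_p, −b_p c_p) ⋯ L(a_{p+n−1}, −b_{p+n−1} c_{p+n−1})`. -/
noncomputable def Amat (a b c : ℤ → ℂ) (p : ℤ) (n : ℕ) : Matrix (Fin 2) (Fin 2) ℂ :=
  ((List.range n).map (fun i => Lmat (a (p + (i : ℕ))) (-(b (p + (i : ℕ)) * c (p + (i : ℕ)))))).prod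

/-!
The transfer matrix `A_n(p)` has first column `(K_n(p), K_{n-1}(p+1))`, because multiplying by
`L(a_p, -b_p c_p)` on the left is exactly the three-term recurrence obtained by expanding the
tridiagonal determinant along its first row. Periodicity gives `A_{lm}(p) = A_l(p)^m`, and by
Cayley–Hamilton `A = A_l(p)` satisfies `A² = 2d·x·A - d²·1` with `x = T/(2d)`, so the Chebyshev
recurrence yields `A^m = d^{m-1} U_{m-1}(x) A - d^m U_{m-2}(x) 1`; read off the `(0,0)` entry.
-/

open Matrix Polynomial Polynomial.Chebyshev

noncomputable def triEntry (a b c : ℤ → ℂ) (p : ℤ) (i j : ℕ) : ℂ :=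
  if i = j then a (p + i)
  else if i + 1 = j then b (p + i)
  else if i = j + 1 then c (p + j)
  else 0

noncomputable def triM (a b c : ℤ → ℂ) (p : ℤ) (n : ℕ) : Matrix (Fin n) (Fin n) ℂ :=
  of fun i j => triEntry a b c p i j

section Continuant

variable (a b c : ℤ → ℂ) (p : ℤ)

theorem contK_natCast (n : ℕ) : contK a b c p n = (triM a b c p n).det := by
  simp only [contK, Int.toNat_natCast, if_neg (Int.natCast_nonneg n).not_gt]
  rfl

theorem contK_neg {n : ℤ} (hn : n < 0) : contK a b c p n = 0 := if_pos hn

theorem contK_zero : contK a b c p 0 = 1 := by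
  simpa using contK_natCast a b c p 0

theorem contK_one : contK a b c p 1 = a p := by
  simpa [triM, triEntry] using contK_natCast a b c p 1

theorem triEntry_add_add (k i j : ℕ) :
    triEntry a b c p (i + k) (j + k) = triEntry a b c (p + k) i j := by
  have hi : p + ((i + k : ℕ) : ℤ) = p + k + i := by push_cast; ring
  have hj : p + ((j + k : ℕ) : ℤ) = p + k + j := by push_cast; ring
  simp only [triEntry, hi, hj, Nat.add_right_cancel_iff, add_right_comm i k 1,
    add_right_comm j k 1]

theorem triM_submatrix_shift {m n k : ℕ} (f g : Fin m → Fin n)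
    (hf : ∀ i, (f i : ℕ) = i + k) (hg : ∀ j, (g j : ℕ) = j + k) :
    (triM a b c p n).submatrix f g = triM a b c (p + k) m := by
  ext i j
  simp only [submatrix_apply, triM, of_apply, hf, hg, triEntry_add_add]

theorem triM_det_minor_zero_one (n : ℕ) :
    ((triM a b c p (n + 2)).submatrix Fin.succ (Fin.succAbove 1)).det =
      c p * (triM a b c (p + 2) n).det := by
  have hminor : ((triM a b c p (n + 2)).submatrix Fin.succ (Fin.succAbove 1)).submatrix
      Fin.succ Fin.succ = triM a b c (p + 2) n := by
    rw [submatrix_submatrix]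
    exact_mod_cast triM_submatrix_shift a b c p _ _ (fun i => rfl) (fun j => by simp)
  rw [det_succ_column_zero, Fin.sum_univ_succ, Finset.sum_eq_zero, Fin.succAbove_zero, hminor]
  · simp [triM, triEntry]
  · intro i _
    simp [triM, triEntry]

theorem triM_det_succ_succ (n : ℕ) :
    (triM a b c p (n + 2)).det =
      a p * (triM a b c (p + 1) (n + 1)).det - b p * c p * (triM a b c (p + 2) n).det := by
  have hminor : (triM a b c p (n + 2)).submatrix Fin.succ Fin.succ = triM a b c (p + 1) (n + 1) :=
    mod_cast triM_submatrix_shift a b c p _ _ (fun i => rfl) (fun j => rfl)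
  rw [det_succ_row_zero, Fin.sum_univ_succ, Fin.sum_univ_succ, Finset.sum_eq_zero,
    Fin.succAbove_zero, hminor, Fin.succ_zero_eq_one, triM_det_minor_zero_one]
  · simp [triM, triEntry]
    ring
  · intro j _
    simp [triM, triEntry]

theorem contK_succ (n : ℕ) :
    contK a b c p (n + 1) =
      a p * contK a b c (p + 1) n - b p * c p * contK a b c (p + 2) (n - 1) := by
  cases n with
  | zero => simp [contK_one, contK_zero, contK_neg]
  | succ n =>
    have h := triM_det_succ_succ a b c p n
    rw [← contK_natCast, ← contK_natCast, ← contK_natCast] at h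
    push_cast at h
    rwa [Nat.cast_succ, add_sub_cancel_right, add_assoc, one_add_one_eq_two]

end Continuant

section Transfer

variable (a b c : ℤ → ℂ)

theorem Amat_zero (p : ℤ) : Amat a b c p 0 = 1 := rfl

theorem Amat_succ (p : ℤ) (n : ℕ) :
    Amat a b c p (n + 1) = Lmat (a p) (-(b p * c p)) * Amat a b c (p + 1) n := by
  simp only [Amat, List.range_succ_eq_map, List.map_cons, List.prod_cons, List.map_map]
  rw [Nat.cast_zero, add_zero]
  congr 3
  funext i
  simp only [Function.comp_apply, Nat.cast_succ, add_assoc, add_comm (i : ℤ) 1]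

theorem Amat_add (p : ℤ) (m n : ℕ) :
    Amat a b c p (m + n) = Amat a b c p m * Amat a b c (p + m) n := by
  simp only [Amat, List.range_add, List.map_append, List.prod_append, List.map_map]
  congr 3
  funext i
  simp [add_assoc]

theorem Amat_add_period {l : ℤ} (ha : Function.Periodic a l) (hb : Function.Periodic b l)
    (hc : Function.Periodic c l) (p : ℤ) (n : ℕ) : Amat a b c (p + l) n = Amat a b c p n := by
  simp only [Amat, add_right_comm p l, ha _, hb _, hc _]

theorem Amat_mul_period {l : ℕ} (ha : Function.Periodic a l) (hb : Function.Periodic b l)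
    (hc : Function.Periodic c l) (p : ℤ) (m : ℕ) :
    Amat a b c p (l * m) = Amat a b c p l ^ m := by
  induction m generalizing p with
  | zero => rfl
  | succ m ih => rw [mul_add_one, add_comm, Amat_add, Amat_add_period a b c ha hb hc, ih, pow_succ']

theorem Amat_first_column (n : ℕ) (p : ℤ) :
    Amat a b c p n 0 0 = contK a b c p n ∧
      Amat a b c p n 1 0 = contK a b c (p + 1) (n - 1) := by
  induction n generalizing p with
  | zero => simp [Amat_zero, contK_zero, contK_neg]
  | succ n ih =>
    obtain ⟨h00, h10⟩ := ih (p + 1)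
    simp only [Amat_succ, mul_apply, Fin.sum_univ_two, Lmat, of_apply, cons_val', cons_val_zero,
      cons_val_one, empty_val', cons_val_fin_one, h00, h10, Nat.cast_succ, add_sub_cancel_right]
    constructor
    · rw [contK_succ, add_assoc p 1 1, one_add_one_eq_two]
      ring
    · ring

end Transfer

theorem pow_succ_eq_chebyshevU {R M : Type*} [CommRing R] [Ring M] [Algebra R M]
    (A : M) (d x : R)
    (hA : A ^ 2 = (2 * d * x) • A - d ^ 2 • 1) (k : ℕ) :
    A ^ (k + 1) = (d ^ k * (U R k).eval x) • A - (d ^ (k + 1) * (U R (k - 1)).eval x) • 1 := by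
  induction k using Nat.twoStepInduction with
  | zero => simp
  | one => simpa [U_one, mul_assoc, mul_left_comm] using hA
  | more k ih ih' =>
    have hstep : A ^ (k + 2 + 1) = (2 * d * x) • A ^ (k + 1 + 1) - d ^ 2 • A ^ (k + 1) := by
      rw [show k + 2 + 1 = k + 1 + 2 by ring, pow_add, hA, mul_sub, mul_smul_comm, mul_smul_comm,
        mul_one, ← pow_succ]
    rw [hstep, ih', ih]
    push_cast
    rw [show (k : ℤ) + 2 - 1 = k + 1 by ring, add_sub_cancel_right, U_add_two, U_add_one]
    simp only [eval_sub, eval_mul, eval_X, eval_ofNat]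
    module

theorem sq_eq_trace_smul_sub_det_smul {R : Type*} [CommRing R] [Nontrivial R]
    (A : Matrix (Fin 2) (Fin 2) R) : A ^ 2 = A.trace • A - A.det • 1 := by
  have h := A.aeval_self_charpoly
  rw [charpoly_fin_two] at h
  simp only [map_add, map_sub, map_mul, map_pow, aeval_X, Polynomial.aeval_C,
    Algebra.algebraMap_eq_smul_one, smul_mul_assoc, one_mul] at h
  rw [← sub_eq_zero, ← h]
  abel

theorem contK_periodic_det_ne_zero_general (l : ℕ) (a b c : ℤ → ℂ)
    (ha : ∀ k : ℤ, a (k + l) = a k) (hb : ∀ k : ℤ, b (k + l) = b k)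
    (hc : ∀ k : ℤ, c (k + l) = c k) (p : ℤ) (T D d : ℂ)
    (hT : T = (Amat a b c p l).trace) (hD : D = (Amat a b c p l).det)
    (hD0 : D ≠ 0) (hd : d ^ 2 = D) (m : ℕ) (hm : 1 ≤ m) :
    contK a b c p ((l : ℤ) * m) =
      d ^ (m - 1) * (Polynomial.Chebyshev.U ℂ ((m : ℤ) - 1)).eval (T / (2 * d))
          * contK a b c p (l : ℤ)
        - d ^ m * (Polynomial.Chebyshev.U ℂ ((m : ℤ) - 2)).eval (T / (2 * d)) := by
  obtain ⟨k, rfl⟩ := Nat.exists_eq_add_of_le' hm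
  have hd0 : d ≠ 0 := by
    rintro rfl
    exact hD0 (by rw [← hd, zero_pow two_ne_zero])
  have hA : Amat a b c p l ^ 2 =
      (2 * d * (T / (2 * d))) • Amat a b c p l - d ^ 2 • 1 := by
    rw [mul_div_cancel₀ _ (mul_ne_zero two_ne_zero hd0), hT, hd, hD]
    exact sq_eq_trace_smul_sub_det_smul _
  have hpow := congrFun₂ (pow_succ_eq_chebyshevU _ d _ hA k) 0 0
  rw [← Amat_mul_period a b c ha hb hc, (Amat_first_column a b c _ p).1] at hpow
  simp only [Matrix.sub_apply, Matrix.smul_apply, one_apply_eq, smul_eq_mul, mul_one,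
    (Amat_first_column a b c l p).1] at hpow
  push_cast at hpow ⊢
  rwa [add_sub_cancel_right, show (k : ℤ) + 1 - 2 = k - 1 by ring]

/-- Periodic continuants (nonzero determinant case), Rózsa's formula: for `l`-periodic
sequences, with `T = tr A_l(p)`, `D = det A_l(p) = Π_{j=1}^{l} b_{p+j−1} c_{p+j−1} ≠ 0`
and `d² = D`, one has `K_{lm}(p) = d^{m−1}·U_{m−1}(T/(2d))·K_l(p) − d^m·U_{m−2}(T/(2d))`
for all `m ≥ 1`. -/
theorem contK_periodic_det_ne_zero (l : ℕ) (hl : 1 ≤ l) (a b c : ℤ → ℂ)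
    (ha : ∀ k : ℤ, a (k + l) = a k) (hb : ∀ k : ℤ, b (k + l) = b k)
    (hc : ∀ k : ℤ, c (k + l) = c k) (p : ℤ) (T D d : ℂ)
    (hT : T = (Amat a b c p l).trace) (hD : D = (Amat a b c p l).det)
    (hD' : D = ∏ j ∈ Finset.range l, b (p + (j : ℤ)) * c (p + (j : ℤ)))
    (hD0 : D ≠ 0) (hd : d ^ 2 = D) (m : ℕ) (hm : 1 ≤ m) :
    contK a b c p ((l : ℤ) * m) =
      d ^ (m - 1) * (Polynomial.Chebyshev.U ℂ ((m : ℤ) - 1)).eval (T / (2 * d))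
          * contK a b c p (l : ℤ)
        - d ^ m * (Polynomial.Chebyshev.U ℂ ((m : ℤ) - 2)).eval (T / (2 * d)) :=
  contK_periodic_det_ne_zero_general l a b c ha hb hc p T D d hT hD hD0 hd m hm
end

section
/- Let q be a nonzero complex number and define the q-deformed Fibonacci sequence F_n(q) by F_1(q) = 1, F_2(q) = 1, F_{2m}(q) = F_{2m−1}(q) + q^{−1}·F_{2m−2}(q) and F_{2m+1}(q) = F_{2m}(q) + q·F_{2m−1}(q) for m ≥ 1. Set x = (1 + q + q^{−1})/2. Then for every integer m ≥ 0, F_{2m+1}(q) = (1+q)·U_{m−1}(x) − U_{m−2}(x) and F_{2m+2}(q) = U_m(x). -/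
/-! With `2x = 1 + q + q⁻¹` one has `F_{2m+2} = U_m(x)` and `F_{2m+1} = U_m(x) − q⁻¹ U_{m−1}(x)`:
in this form both recurrences follow by induction from `U_{m+1} = 2x U_m − U_{m−1}` and
`q q⁻¹ = 1`. The same Chebyshev recurrence rewrites `U_m − q⁻¹ U_{m−1}` as
`(1 + q) U_{m−1} − U_{m−2}`. -/

open Polynomial Polynomial.Chebyshev

variable {K : Type*} [Field K] {q x : K}

theorem chebyshevU_eval_sub_inv_mul (hx : 2 * x = 1 + q + q⁻¹) (n : ℤ) :
    (U K n).eval x - q⁻¹ * (U K (n - 1)).eval x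
      = (1 + q) * (U K (n - 1)).eval x - (U K (n - 2)).eval x := by
  rw [U_eq K n]
  simp only [eval_sub, eval_mul, eval_ofNat, eval_X, hx]
  ring

theorem qFibonacci_eq_chebyshevU_of_recurrence (hq : q ≠ 0) (hx : 2 * x = 1 + q + q⁻¹)
    (F : ℕ → K) (hF1 : F 1 = 1) (hF2 : F 2 = 1)
    (hFeven : ∀ m : ℕ, F (2 * m + 4) = F (2 * m + 3) + q⁻¹ * F (2 * m + 2))
    (hFodd : ∀ m : ℕ, F (2 * m + 3) = F (2 * m + 2) + q * F (2 * m + 1)) (m : ℕ) :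
    F (2 * m + 1) = (U K m).eval x - q⁻¹ * (U K ((m : ℤ) - 1)).eval x ∧
      F (2 * m + 2) = (U K m).eval x := by
  induction m with
  | zero => simp [hF1, hF2]
  | succ m ih =>
    obtain ⟨ih_odd, ih_even⟩ := ih
    have hU : (U K ((m : ℤ) + 1)).eval x = 2 * x * (U K m).eval x - (U K ((m : ℤ) - 1)).eval x := by
      simp [U_add_one]
    have h_odd : F (2 * m + 3) = (U K ((m : ℤ) + 1)).eval x - q⁻¹ * (U K m).eval x := by
      rw [hFodd, ih_odd, ih_even, hU, hx]
      field_simp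
      ring
    refine ⟨?_, ?_⟩
    · simpa [show 2 * (m + 1) + 1 = 2 * m + 3 by ring] using h_odd
    · rw [show 2 * (m + 1) + 2 = 2 * m + 4 by ring, hFeven, h_odd, ih_even]
      push_cast
      ring

/-- The `q`-deformed Fibonacci numbers `F_n(q)` (with `F₁ = F₂ = 1`,
`F_{2m} = F_{2m−1} + q⁻¹ F_{2m−2}`, `F_{2m+1} = F_{2m} + q F_{2m−1}` for `m ≥ 1`)
satisfy `F_{2m+1}(q) = (1+q)·U_{m−1}(x) − U_{m−2}(x)` and `F_{2m+2}(q) = U_m(x)`,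
where `x = (1 + q + q⁻¹)/2`. -/
theorem qFibonacci_eq_chebyshevU (q : ℂ) (hq : q ≠ 0) (F : ℕ → ℂ)
    (hF1 : F 1 = 1) (hF2 : F 2 = 1)
    (hFeven : ∀ m : ℕ, 1 ≤ m → F (2 * m) = F (2 * m - 1) + q⁻¹ * F (2 * m - 2))
    (hFodd : ∀ m : ℕ, 1 ≤ m → F (2 * m + 1) = F (2 * m) + q * F (2 * m - 1))
    (x : ℂ) (hx : x = (1 + q + q⁻¹) / 2) (m : ℕ) :
    F (2 * m + 1) = (1 + q) * (Polynomial.Chebyshev.U ℂ ((m : ℤ) - 1)).eval x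
        - (Polynomial.Chebyshev.U ℂ ((m : ℤ) - 2)).eval x ∧
    F (2 * m + 2) = (Polynomial.Chebyshev.U ℂ (m : ℤ)).eval x := by
  have h2x : 2 * x = 1 + q + q⁻¹ := by rw [hx]; ring
  have hFeven' (m : ℕ) : F (2 * m + 4) = F (2 * m + 3) + q⁻¹ * F (2 * m + 2) := by
    simpa [show 2 * (m + 2) - 1 = 2 * m + 3 by omega, mul_add] using hFeven (m + 2) (by omega)
  have hFodd' (m : ℕ) : F (2 * m + 3) = F (2 * m + 2) + q * F (2 * m + 1) := by
    simpa [show 2 * (m + 1) - 1 = 2 * m + 1 by omega, mul_add] using hFodd (m + 1) (by omega)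
  rw [← chebyshevU_eval_sub_inv_mul h2x]
  exact qFibonacci_eq_chebyshevU_of_recurrence hq h2x F hF1 hF2 hFeven' hFodd' m
end
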